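/- Let X be a Banach lattice and Y ⊆ X a closed ideal. If Y is reflexive and the quotient Banach lattice X/Y is LWCG, then X is LWCG. -/

import Mathlib

/-!
Let `Y = ker q`. Under the embedding of `X` into its weak-star bidual, the set
`A = q⁻¹(K ∪ {0}) ∩ r B_X` becomes `r B_{X**} ∩ (q**)⁻¹(K)`: an element of `X**` that `q**` sends
into `Z` lies in `X + Y^⊥⊥ = X + Y`, because `Y` is reflexive. Hence `A` is weakly compact by
Banach–Alaoglu. The closed sublattice generated by `A` contains a ball of `Y`, hence `Y`, so it is
saturated for `q`; as `q` is open, its image is a closed sublattice of `Z` containing `K`, hence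
all of `Z`, and so the sublattice is all of `X`.
-/

open Filter Topology Set

section Defs

variable {E : Type*} [NormedAddCommGroup E] [NormedSpace ℝ E]

/-- A set is weakly compact if it is compact in the weak topology. -/
def WeaklyCompact (K : Set E) : Prop := IsCompact (toWeakSpace ℝ E '' K)

/-- A set is weakly precompact if every sequence in it has a weakly Cauchy subsequence. -/
def WeaklyPrecompact (K : Set E) : Prop :=
  ∀ x : ℕ → E, (∀ n, x n ∈ K) → ∃ φ : ℕ → ℕ, StrictMono φ ∧
    ∀ f : E →L[ℝ] ℝ, ∃ l : ℝ, Tendsto (fun n => f (x (φ n))) atTop (𝓝 l)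

end Defs

section LatDefs

variable {E : Type*} [NormedAddCommGroup E] [Lattice E] [NormedSpace ℝ E]

/-- A closed sublattice: a closed linear subspace closed under `⊔` and `⊓`. -/
def IsClosedSublattice (S : Set E) : Prop :=
  IsClosed S ∧ (0 : E) ∈ S ∧ (∀ x ∈ S, ∀ y ∈ S, x + y ∈ S) ∧
    (∀ c : ℝ, ∀ x ∈ S, c • x ∈ S) ∧
    (∀ x ∈ S, ∀ y ∈ S, x ⊔ y ∈ S) ∧ (∀ x ∈ S, ∀ y ∈ S, x ⊓ y ∈ S)

/-- `L(A)`: the smallest closed sublattice containing `A`. -/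
def sublatticeGen (A : Set E) : Set E := ⋂₀ {S | IsClosedSublattice S ∧ A ⊆ S}

/-- The solid hull of a set. -/
def solidHull (A : Set E) : Set E := ⋃ x ∈ A, Set.Icc (-|x|) |x|

/-- A closed ideal: a closed linear subspace which is solid. -/
def IsClosedIdeal (S : Set E) : Prop :=
  IsClosed S ∧ (0 : E) ∈ S ∧ (∀ x ∈ S, ∀ y ∈ S, x + y ∈ S) ∧
    (∀ c : ℝ, ∀ x ∈ S, c • x ∈ S) ∧
    (∀ x : E, ∀ y ∈ S, |x| ≤ |y| → x ∈ S)

/-- `I(A)`: the smallest closed ideal containing `A`. -/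
def idealGen (A : Set E) : Set E := ⋂₀ {S | IsClosedIdeal S ∧ A ⊆ S}

/-- A band: a closed ideal closed under existing suprema. -/
def IsBand (S : Set E) : Prop :=
  IsClosedIdeal S ∧ ∀ D ⊆ S, ∀ x : E, IsLUB D x → x ∈ S

/-- `B(A)`: the smallest band containing `A`. -/
def bandGen (A : Set E) : Set E := ⋂₀ {S | IsBand S ∧ A ⊆ S}

/-- Disjoint complement of a set. -/
def disjComplement (A : Set E) : Set E := {x : E | ∀ y ∈ A, |x| ⊓ |y| = 0}

end LatDefs

/-- Order continuity of the norm: every downward directed set with infimum `0`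
has norms converging to `0` along the order. -/
def OrderContinuousBL (E : Type*) [NormedAddCommGroup E] [Lattice E] : Prop :=
  ∀ D : Set E, D.Nonempty → DirectedOn (· ≥ ·) D → IsGLB D 0 →
    ∀ ε > 0, ∃ d ∈ D, ∀ e ∈ D, e ≤ d → ‖e‖ < ε

/-- Density character of a topological space. -/
noncomputable def densChar (T : Type*) [TopologicalSpace T] : Cardinal :=
  sInf {c : Cardinal | ∃ s : Set T, Dense s ∧ Cardinal.mk s = c}

open NormedSpace Metric

section OpenMapping

variable {𝕜 : Type*} [NontriviallyNormedField 𝕜]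
  {X Z F : Type*} [NormedAddCommGroup X] [NormedSpace 𝕜 X]
  [NormedAddCommGroup Z] [NormedSpace 𝕜 Z] [NormedAddCommGroup F] [NormedSpace 𝕜 F]

noncomputable def ContinuousLinearMap.dualMap (q : X →L[𝕜] Z) :
    StrongDual 𝕜 Z →L[𝕜] StrongDual 𝕜 X :=
  (ContinuousLinearMap.compL 𝕜 X Z 𝕜).flip q

@[simp]
theorem ContinuousLinearMap.dualMap_apply (q : X →L[𝕜] Z) (g : StrongDual 𝕜 Z) :
    q.dualMap g = g.comp q := rfl

theorem ContinuousLinearMap.exists_comp_eq_of_ker_le [CompleteSpace X] [CompleteSpace Z]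
    (q : X →L[𝕜] Z) (hq : Function.Surjective q) (f : X →L[𝕜] F)
    (hker : LinearMap.ker (q : X →ₗ[𝕜] Z) ≤ LinearMap.ker (f : X →ₗ[𝕜] F)) :
    ∃ g : Z →L[𝕜] F, g.comp q = f := by
  obtain ⟨s, hs⟩ :=
    (q : X →ₗ[𝕜] Z).exists_rightInverse_of_surjective (LinearMap.range_eq_top.mpr hq)
  have hfactor : (f : X →ₗ[𝕜] F).comp s ∘ q = f := by
    funext x
    have : s (q x) - x ∈ LinearMap.ker (f : X →ₗ[𝕜] F) :=
      hker (by simpa [sub_eq_zero] using LinearMap.congr_fun hs (q x))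
    simpa [sub_eq_zero] using this
  exact ⟨⟨(f : X →ₗ[𝕜] F).comp s, (q.isQuotientMap hq).continuous_iff.mpr
    (hfactor ▸ f.continuous)⟩, ContinuousLinearMap.ext (congrFun hfactor)⟩

theorem ContinuousLinearMap.exists_subset_image_preimage_inter_closedBall [CompleteSpace X]
    [CompleteSpace Z] (q : X →L[𝕜] Z) (hq : Function.Surjective q) {K : Set Z}
    (hK : Bornology.IsBounded K) : ∃ r > 0, K ⊆ q '' (q ⁻¹' K ∩ closedBall 0 r) := by
  obtain ⟨C, hC, hpre⟩ := q.exists_preimage_norm_le hq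
  obtain ⟨R, hR, hKR⟩ := hK.exists_pos_norm_le
  refine ⟨C * R, by positivity, fun z hz => ?_⟩
  obtain ⟨x, rfl, hx⟩ := hpre z
  exact ⟨x, ⟨hz, mem_closedBall_zero_iff.mpr (hx.trans (by gcongr; exact hKR _ hz))⟩, rfl⟩

end OpenMapping

section HahnBanach

variable {𝕜 : Type*} [RCLike 𝕜] {X : Type*} [NormedAddCommGroup X] [NormedSpace 𝕜 X]

@[simp]
theorem norm_inclusionInDoubleDual (x : X) : ‖inclusionInDoubleDual 𝕜 X x‖ = ‖x‖ :=
  (inclusionInDoubleDualLi 𝕜).norm_map x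

theorem Submodule.dualMap_subtypeL_surjective (Y : Submodule 𝕜 X) :
    Function.Surjective Y.subtypeL.dualMap := fun h => by
  obtain ⟨g, hg, -⟩ := exists_extension_norm_eq Y h
  exact ⟨g, ContinuousLinearMap.ext hg⟩

theorem Submodule.exists_eq_inclusionInDoubleDual_of_reflexive
    (Y : Submodule 𝕜 X) (hY : Function.Surjective (inclusionInDoubleDual 𝕜 Y))
    (φ : StrongDual 𝕜 (StrongDual 𝕜 X)) (hφ : ∀ f : StrongDual 𝕜 X, (∀ y ∈ Y, f y = 0) → φ f = 0) :
    ∃ y ∈ Y, inclusionInDoubleDual 𝕜 X y = φ := by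
  obtain ⟨ψ, hψ⟩ := Y.subtypeL.dualMap.exists_comp_eq_of_ker_le Y.dualMap_subtypeL_surjective φ
    fun f hf => hφ f fun y hy => DFunLike.congr_fun hf ⟨y, hy⟩
  obtain ⟨y, rfl⟩ := hY ψ
  exact ⟨y, y.2, ContinuousLinearMap.ext fun f => by simp [← hψ]⟩

end HahnBanach

section WeakCompactness

variable {E : Type*} [NormedAddCommGroup E] [NormedSpace ℝ E]

theorem weaklyCompact_iff_isCompact_inclusionInDoubleDual {K : Set E} :
    WeaklyCompact K ↔
      IsCompact ((fun x => StrongDual.toWeakDual (inclusionInDoubleDual ℝ E x)) '' K) := by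
  rw [WeaklyCompact, (isEmbedding_inclusionInDoubleDualWeak ℝ E).isCompact_iff, image_image]
  rfl

theorem WeaklyCompact.isBounded {K : Set E} (hK : WeaklyCompact K) : Bornology.IsBounded K := by
  have hvN := (weaklyCompact_iff_isCompact_inclusionInDoubleDual.mp hK).isVonNBounded ℝ
  have hb : Bornology.IsBounded (inclusionInDoubleDual ℝ E '' K) := by
    have := WeakDual.isBounded_toWeakDual_preimage_iff_isBounded.mpr
      (WeakDual.isBounded_iff_isVonNBounded.mpr hvN)
    rwa [← image_image, StrongDual.toWeakDual.injective.preimage_image] at this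
  exact ((inclusionInDoubleDualLi ℝ).antilipschitz.isBounded_preimage hb).subset
    (subset_preimage_image _ K)

theorem WeaklyCompact.insert {K : Set E} (hK : WeaklyCompact K) (x : E) :
    WeaklyCompact (insert x K) := by
  rw [WeaklyCompact, image_insert_eq]
  exact IsCompact.insert hK _

end WeakCompactness

section Bidual

variable {X Z : Type*} [NormedAddCommGroup X] [NormedSpace ℝ X]
  [NormedAddCommGroup Z] [NormedSpace ℝ Z]

noncomputable def ContinuousLinearMap.bidualMap (q : X →L[ℝ] Z) :
    WeakDual ℝ (StrongDual ℝ X) → WeakDual ℝ (StrongDual ℝ Z) :=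
  fun φ => StrongDual.toWeakDual ((WeakDual.toStrongDual φ).comp q.dualMap)

theorem ContinuousLinearMap.continuous_bidualMap (q : X →L[ℝ] Z) : Continuous q.bidualMap :=
  WeakDual.continuous_of_continuous_eval fun g => WeakDual.eval_continuous (q.dualMap g)

theorem ContinuousLinearMap.exists_inclusionInDoubleDual_eq_of_comp_dualMap [CompleteSpace X]
    [CompleteSpace Z] (q : X →L[ℝ] Z) (hq : Function.Surjective q)
    (hrefl : Function.Surjective (inclusionInDoubleDual ℝ (LinearMap.ker (q : X →ₗ[ℝ] Z))))
    (φ : StrongDual ℝ (StrongDual ℝ X)) (z : Z)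
    (hφ : φ.comp q.dualMap = inclusionInDoubleDual ℝ Z z) :
    ∃ x, q x = z ∧ inclusionInDoubleDual ℝ X x = φ := by
  obtain ⟨x₀, rfl⟩ := hq z
  have hann (f : StrongDual ℝ X) (hf : ∀ y ∈ LinearMap.ker (q : X →ₗ[ℝ] Z), f y = 0) :
      (φ - inclusionInDoubleDual ℝ X x₀) f = 0 := by
    obtain ⟨g, rfl⟩ := q.exists_comp_eq_of_ker_le hq f hf
    simpa [sub_eq_zero] using DFunLike.congr_fun hφ g
  obtain ⟨y, hy, hyφ⟩ :=
    (LinearMap.ker (q : X →ₗ[ℝ] Z)).exists_eq_inclusionInDoubleDual_of_reflexive hrefl _ hann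
  refine ⟨x₀ + y, by simpa using hy, ?_⟩
  rw [map_add, hyφ, add_sub_cancel]

theorem ContinuousLinearMap.weaklyCompact_preimage_inter_closedBall [CompleteSpace X]
    [CompleteSpace Z] (q : X →L[ℝ] Z) (hq : Function.Surjective q)
    (hrefl : Function.Surjective (inclusionInDoubleDual ℝ (LinearMap.ker (q : X →ₗ[ℝ] Z))))
    {K : Set Z} (hK : WeaklyCompact K) (r : ℝ) : WeaklyCompact (q ⁻¹' K ∩ closedBall 0 r) := by
  rw [weaklyCompact_iff_isCompact_inclusionInDoubleDual] at hK ⊢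
  have hball (x : X) : StrongDual.toWeakDual (inclusionInDoubleDual ℝ X x) ∈
      WeakDual.toStrongDual ⁻¹' closedBall 0 r ↔ x ∈ closedBall 0 r :=
    (mem_closedBall_zero_iff (E := StrongDual ℝ (StrongDual ℝ X))).trans <| by
      change ‖inclusionInDoubleDual ℝ X x‖ ≤ r ↔ _
      rw [norm_inclusionInDoubleDual, mem_closedBall_zero_iff]
  have hrange : (fun x => StrongDual.toWeakDual (inclusionInDoubleDual ℝ X x)) ''
      (q ⁻¹' K ∩ closedBall 0 r) = WeakDual.toStrongDual ⁻¹' closedBall 0 r ∩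
        q.bidualMap ⁻¹' ((fun z => StrongDual.toWeakDual (inclusionInDoubleDual ℝ Z z)) '' K) := by
    ext φ
    constructor
    · rintro ⟨x, ⟨hxK, hxr⟩, rfl⟩
      exact ⟨(hball x).mpr hxr, q x, hxK, rfl⟩
    · rintro ⟨hφr, z, hzK, hz⟩
      obtain ⟨x, rfl, hx⟩ := q.exists_inclusionInDoubleDual_eq_of_comp_dualMap hq hrefl
        (WeakDual.toStrongDual φ) z (congrArg WeakDual.toStrongDual hz).symm
      have hφ : StrongDual.toWeakDual (inclusionInDoubleDual ℝ X x) = φ := by simp [hx]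
      exact ⟨x, ⟨hzK, (hball x).mp (hφ ▸ hφr)⟩, hφ⟩
  rw [hrange]
  exact WeakDual.isCompact_of_bounded_of_closed
    ((WeakDual.isBounded_closedBall 0 r).subset inter_subset_left)
    ((WeakDual.isClosed_closedBall 0 r).inter (hK.isClosed.preimage q.continuous_bidualMap))

end Bidual

section Sublattice

variable {E : Type*} [NormedAddCommGroup E] [Lattice E] [NormedSpace ℝ E]

theorem isClosedSublattice_sublatticeGen (A : Set E) : IsClosedSublattice (sublatticeGen A) := by
  simp only [sublatticeGen]
  exact ⟨isClosed_sInter fun S hS => hS.1.1, fun S hS => hS.1.2.1,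
    fun x hx y hy S hS => hS.1.2.2.1 x (hx S hS) y (hy S hS),
    fun c x hx S hS => hS.1.2.2.2.1 c x (hx S hS),
    fun x hx y hy S hS => hS.1.2.2.2.2.1 x (hx S hS) y (hy S hS),
    fun x hx y hy S hS => hS.1.2.2.2.2.2 x (hx S hS) y (hy S hS)⟩

theorem subset_sublatticeGen (A : Set E) : A ⊆ sublatticeGen A :=
  fun _ hx => mem_sInter.2 fun _ hS => hS.2 hx

theorem sublatticeGen_minimal {A S : Set E} (hS : IsClosedSublattice S) (hAS : A ⊆ S) :
    sublatticeGen A ⊆ S :=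
  sInter_subset_of_mem ⟨hS, hAS⟩

theorem IsClosedSublattice.submodule_subset {T : Set E} (hT : IsClosedSublattice T)
    (Y : Submodule ℝ E) {r : ℝ} (hr : 0 < r) (hY : ∀ v ∈ Y, ‖v‖ ≤ r → v ∈ T) : (Y : Set E) ⊆ T := by
  intro v hv
  obtain rfl | hv0 := eq_or_ne v 0
  · exact hT.2.1
  have hnorm : 0 < ‖v‖ := norm_pos_iff.mpr hv0
  have hw : (r / ‖v‖) • v ∈ T :=
    hY _ (Y.smul_mem _ hv) (by rw [norm_smul, Real.norm_of_nonneg (by positivity),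
      div_mul_cancel₀ _ hnorm.ne'])
  simpa [smul_smul, hr.ne', hnorm.ne'] using hT.2.2.2.1 (‖v‖ / r) _ hw

end Sublattice

theorem map_inf_of_map_sup {α β F : Type*} [AddCommGroup α] [Lattice α] [IsOrderedAddMonoid α]
    [AddCommGroup β] [Lattice β] [IsOrderedAddMonoid β] [FunLike F α β] [AddMonoidHomClass F α β]
    (q : F) (hq : ∀ x y, q (x ⊔ y) = q x ⊔ q y) (x y : α) : q (x ⊓ y) = q x ⊓ q y := by
  have h := congrArg q (inf_add_sup x y)
  rw [map_add, map_add, hq, ← inf_add_sup (q x) (q y)] at h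
  exact add_right_cancel h

theorem preimage_image_eq_of_ker_subset {G H F : Type*} [AddGroup G] [AddGroup H] [FunLike F G H]
    [AddMonoidHomClass F G H] (q : F) {T : Set G} (hadd : ∀ x ∈ T, ∀ y ∈ T, x + y ∈ T)
    (hker : ∀ x, q x = 0 → x ∈ T) : q ⁻¹' (q '' T) = T := by
  refine (subset_preimage_image q T).antisymm' fun x ⟨t, ht, hqt⟩ => ?_
  simpa using hadd t ht (-t + x) (hker _ (by simp [hqt]))

section Quotient

variable {X Z : Type*} [NormedAddCommGroup X] [Lattice X] [IsOrderedAddMonoid X]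
  [NormedSpace ℝ X] [CompleteSpace X] [NormedAddCommGroup Z] [Lattice Z] [IsOrderedAddMonoid Z]
  [NormedSpace ℝ Z] [CompleteSpace Z] {q : X →L[ℝ] Z} {T : Set X}

theorem IsClosedSublattice.image (hT : IsClosedSublattice T) (hq : Function.Surjective q)
    (hlat : ∀ x y, q (x ⊔ y) = q x ⊔ q y) (hker : ∀ x, q x = 0 → x ∈ T) :
    IsClosedSublattice (q '' T) := by
  obtain ⟨hclosed, hzero, hadd, hsmul, hsup, hinf⟩ := hT
  refine ⟨(q.isQuotientMap hq).isClosed_preimage.mp ?_, ⟨0, hzero, map_zero q⟩, ?_, ?_, ?_, ?_⟩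
  · rwa [preimage_image_eq_of_ker_subset q hadd hker]
  · rintro _ ⟨x, hx, rfl⟩ _ ⟨y, hy, rfl⟩
    exact ⟨x + y, hadd x hx y hy, map_add q x y⟩
  · rintro c _ ⟨x, hx, rfl⟩
    exact ⟨c • x, hsmul c x hx, map_smul q c x⟩
  · rintro _ ⟨x, hx, rfl⟩ _ ⟨y, hy, rfl⟩
    exact ⟨x ⊔ y, hsup x hx y hy, hlat x y⟩
  · rintro _ ⟨x, hx, rfl⟩ _ ⟨y, hy, rfl⟩
    exact ⟨x ⊓ y, hinf x hx y hy, map_inf_of_map_sup q hlat x y⟩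

theorem IsClosedSublattice.eq_univ_of_image_generates (hT : IsClosedSublattice T)
    (hq : Function.Surjective q) (hlat : ∀ x y, q (x ⊔ y) = q x ⊔ q y)
    (hker : ∀ x, q x = 0 → x ∈ T) {K : Set Z} (hKgen : sublatticeGen K = univ)
    (hKT : K ⊆ q '' T) : T = univ := by
  have himage : q '' T = univ :=
    eq_univ_of_univ_subset (hKgen ▸ sublatticeGen_minimal (hT.image hq hlat hker) hKT)
  rw [← preimage_image_eq_of_ker_subset q hT.2.2.1 hker, himage, preimage_univ]

end Quotient

/-- The quotient `X/Y` is represented by any Banach lattice `Z` together with a surjective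
lattice homomorphism `q : X → Z`; `Y` is its kernel. -/
theorem LWCG_of_quotient_LWCG_of_reflexive_ideal_general
    {X Z : Type*} [NormedAddCommGroup X] [Lattice X] [IsOrderedAddMonoid X] [NormedSpace ℝ X] [CompleteSpace X]
    [NormedAddCommGroup Z] [Lattice Z] [IsOrderedAddMonoid Z] [NormedSpace ℝ Z] [CompleteSpace Z]
    (q : X →L[ℝ] Z) (hlat : ∀ x y : X, q (x ⊔ y) = q x ⊔ q y)
    (hq : Function.Surjective q)
    (hrefl : Function.Surjective (NormedSpace.inclusionInDoubleDual ℝ ↥(LinearMap.ker (q : X →ₗ[ℝ] Z))))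
    (hZ : ∃ K : Set Z, WeaklyCompact K ∧ sublatticeGen K = Set.univ) :
    ∃ K : Set X, WeaklyCompact K ∧ sublatticeGen K = Set.univ := by
  obtain ⟨K, hK, hKgen⟩ := hZ
  obtain ⟨r, hr, hKlift⟩ := q.exists_subset_image_preimage_inter_closedBall hq hK.isBounded
  set A := q ⁻¹' insert 0 K ∩ closedBall 0 r
  have hT := isClosedSublattice_sublatticeGen A
  refine ⟨A, q.weaklyCompact_preimage_inter_closedBall hq hrefl (hK.insert 0) r,
    hT.eq_univ_of_image_generates hq hlat (fun x hx => ?_) hKgen ?_⟩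
  · refine hT.submodule_subset (LinearMap.ker (q : X →ₗ[ℝ] Z)) hr (fun v hv hvr => ?_) hx
    exact subset_sublatticeGen A ⟨Or.inl hv, mem_closedBall_zero_iff.mpr hvr⟩
  · refine hKlift.trans (image_mono ?_)
    exact (inter_subset_inter_left _ (preimage_mono (subset_insert 0 K))).trans
      (subset_sublatticeGen A)

/-- if Y is a reflexive closed ideal of X and the quotient Banach
lattice X/Y is LWCG, then X is LWCG. The quotient is represented by any Banach
lattice Z together with a surjective lattice homomorphism q : X → Z with kernel Y. -/
theorem LWCG_of_quotient_LWCG_of_reflexive_ideal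
    {X Z : Type*} [NormedAddCommGroup X] [Lattice X] [HasSolidNorm X] [IsOrderedAddMonoid X] [NormedSpace ℝ X] [CompleteSpace X]
    [NormedAddCommGroup Z] [Lattice Z] [HasSolidNorm Z] [IsOrderedAddMonoid Z] [NormedSpace ℝ Z] [CompleteSpace Z]
    (q : X →L[ℝ] Z) (hlat : ∀ x y : X, q (x ⊔ y) = q x ⊔ q y)
    (hq : Function.Surjective q)
    (hideal : ∀ x y : X, y ∈ LinearMap.ker (q : X →ₗ[ℝ] Z) → |x| ≤ |y| → x ∈ LinearMap.ker (q : X →ₗ[ℝ] Z))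
    (hrefl : Function.Surjective (NormedSpace.inclusionInDoubleDual ℝ ↥(LinearMap.ker (q : X →ₗ[ℝ] Z))))
    (hZ : ∃ K : Set Z, WeaklyCompact K ∧ sublatticeGen K = Set.univ) :
    ∃ K : Set X, WeaklyCompact K ∧ sublatticeGen K = Set.univ :=
  LWCG_of_quotient_LWCG_of_reflexive_ideal_general q hlat hq hrefl hZ
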